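/- For every d = (d_1,…,d_n) with d_1,…,d_{n−1} ∈ ℝ ∪ {−∞} and d_n ∈ ℝ, the set M_d = {μ ∈ C : d_i ≤ S_i(μ) for 1 ≤ i ≤ n−1, and d_n = S_n(μ)} is nonempty and contains a unique minimal element ρ(d) with respect to ≤, i.e. ρ(d) ∈ M_d and ρ(d) ≤ μ for every μ ∈ M_d. Moreover, if all coordinates d_i are finite and x ∈ ℝ^n is the unique vector with S_i(x) = d_i for all i, then ρ(d) = r(x). -/

import Mathlib

/-!
Encode a vector by its partial sums `k ↦ S_k`, a sequence with `S_0 = 0`: the vector is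
dominant iff the sequence is concave on `{0, …, n}`. So `M_d` consists of the concave sequences
with `S_n = d_n` lying above the `d_k`. It is nonempty, and its pointwise infimum (bounded
below by the chord, `S_k ≥ k S_n / n`) is again such a sequence; this is `ρ(d)`.

When `S_k(x) = d_k`, minimality of `ρ` gives complementary slackness: `ρ_k = ρ_{k+1}` wherever
`S_k(x) < S_k(ρ)`. Abel summation writes `⟪x - ρ, c - ρ⟫` as
`-∑_k (S_k(x) - S_k(ρ)) ((c - ρ)_{k+1} - (c - ρ)_k)`, which is then `≤ 0` for every dominant `c`:
this variational inequality says that `ρ` is the point of `C` closest to `x`.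
-/

/-- The dominant cone `C = {x ∈ ℝⁿ : x₁ ≥ x₂ ≥ ⋯ ≥ xₙ}`. -/
def domCone (n : ℕ) : Set (EuclideanSpace ℝ (Fin n)) :=
  {x | ∀ i j : Fin n, i ≤ j → x j ≤ x i}

/-- `r` is the map sending each point of `ℝⁿ` to the (unique) closest point
of the dominant cone. -/
def IsClosestPointMap (n : ℕ)
    (r : EuclideanSpace ℝ (Fin n) → EuclideanSpace ℝ (Fin n)) : Prop :=
  ∀ x, r x ∈ domCone n ∧ ∀ c ∈ domCone n, dist x (r x) ≤ dist x c

/-- `S_k(x) = x₁ + ⋯ + x_k`, the sum of the first `k` coordinates. -/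
def psum {n : ℕ} (x : Fin n → ℝ) (k : ℕ) : ℝ :=
  ∑ j ∈ Finset.univ.filter (fun j : Fin n => (j : ℕ) < k), x j

/-- The dominance order: `x ≤ y` iff `S_k(x) ≤ S_k(y)` for `k = 1, …, n-1`
and `S_n(x) = S_n(y)`. -/
def dle {n : ℕ} (x y : Fin n → ℝ) : Prop :=
  (∀ k, 1 ≤ k → k < n → psum x k ≤ psum y k) ∧ psum x n = psum y n

/-- The set `M_d = {μ ∈ C : d_i ≤ S_i(μ) for 1 ≤ i ≤ n-1, d_n = S_n(μ)}`, where the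
`d_i` for `1 ≤ i ≤ n-1` are allowed to be `-∞` (the bottom element of `WithBot ℝ`). -/
def Md (n : ℕ) (d : ℕ → WithBot ℝ) : Set (EuclideanSpace ℝ (Fin n)) :=
  {μ | μ ∈ domCone n ∧
       (∀ k, 1 ≤ k → k < n → d k ≤ ((psum μ k : ℝ) : WithBot ℝ)) ∧
       d n = ((psum μ n : ℝ) : WithBot ℝ)}

open Finset
open scoped InnerProductSpace

theorem WithBot.le_coe_ciInf {α ι : Type*} [ConditionallyCompleteLattice α] [Nonempty ι]
    {f : ι → α} {b : WithBot α} (h : ∀ i, b ≤ f i) : b ≤ ↑(⨅ i, f i) := by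
  cases b with
  | bot => exact bot_le
  | coe b => exact WithBot.coe_le_coe.mpr (le_ciInf fun i => WithBot.coe_le_coe.mp (h i))

theorem eq_of_inner_sub_nonpos_of_norm_sub_le {F : Type*} [NormedAddCommGroup F]
    [InnerProductSpace ℝ F] {x p c : F} (hinner : ⟪x - p, c - p⟫_ℝ ≤ 0)
    (hnorm : ‖x - c‖ ≤ ‖x - p‖) : c = p := by
  have hexpand := norm_sub_sq_real (x - p) (c - p)
  rw [sub_sub_sub_cancel_right] at hexpand
  have hsq : ‖x - c‖ ^ 2 ≤ ‖x - p‖ ^ 2 := pow_le_pow_left₀ (norm_nonneg _) hnorm 2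
  rw [← norm_sub_eq_zero_iff, ← sq_eq_zero_iff]
  exact le_antisymm (by linarith) (sq_nonneg _)

section

variable {n : ℕ} {d : ℕ → WithBot ℝ}

def zeroExtend (x : Fin n → ℝ) (j : ℕ) : ℝ := if h : j < n then x ⟨j, h⟩ else 0

theorem zeroExtend_of_lt (x : Fin n → ℝ) {j : ℕ} (hj : j < n) : zeroExtend x j = x ⟨j, hj⟩ :=
  dif_pos hj

theorem psum_zero (x : Fin n → ℝ) : psum x 0 = 0 := by
  simp [psum]

theorem psum_succ (x : Fin n → ℝ) {k : ℕ} (hk : k < n) :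
    psum x (k + 1) = psum x k + x ⟨k, hk⟩ := by
  have hfilter : univ.filter (fun j : Fin n => (j : ℕ) < k + 1) =
      insert ⟨k, hk⟩ (univ.filter fun j : Fin n => (j : ℕ) < k) := by
    ext j
    simp only [mem_filter, mem_univ, true_and, mem_insert, Fin.ext_iff]
    omega
  rw [psum, psum, hfilter, sum_insert (by simp), add_comm]

theorem psum_eq_sum_range (x : Fin n → ℝ) {k : ℕ} (hk : k ≤ n) :
    psum x k = ∑ j ∈ range k, zeroExtend x j := by
  induction k with
  | zero => exact psum_zero x
  | succ k ih =>
    rw [psum_succ x hk, ih (by omega), sum_range_succ, zeroExtend_of_lt x hk]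

theorem psum_sub (x y : Fin n → ℝ) (k : ℕ) : psum (x - y) k = psum x k - psum y k := by
  simp [psum, sum_sub_distrib]

def ofPartialSums (n : ℕ) (T : ℕ → ℝ) : EuclideanSpace ℝ (Fin n) :=
  WithLp.toLp 2 fun i => T (i + 1) - T i

theorem psum_ofPartialSums {T : ℕ → ℝ} (hT : T 0 = 0) {k : ℕ} (hk : k ≤ n) :
    psum (ofPartialSums n T) k = T k := by
  induction k with
  | zero => rw [psum_zero, hT]
  | succ k ih =>
    rw [psum_succ _ hk, ih (by omega)]
    simp [ofPartialSums]

theorem eq_of_psum_eq {x y : EuclideanSpace ℝ (Fin n)} (h : ∀ k ≤ n, psum x k = psum y k) :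
    x = y := by
  ext i
  have hx := psum_succ x i.isLt
  have hy := psum_succ y i.isLt
  rw [h _ i.isLt, h _ i.isLt.le] at hx
  linarith

theorem dle_antisymm {x y : EuclideanSpace ℝ (Fin n)} (hxy : dle x y) (hyx : dle y x) :
    x = y := by
  refine eq_of_psum_eq fun k hk => ?_
  rcases Nat.eq_zero_or_pos k with rfl | hk0
  · rw [psum_zero, psum_zero]
  rcases hk.lt_or_eq with hkn | rfl
  · exact (hxy.1 k hk0 hkn).antisymm (hyx.1 k hk0 hkn)
  · exact hxy.2

def IsConcaveSeq (n : ℕ) (T : ℕ → ℝ) : Prop :=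
  ∀ m, m + 2 ≤ n → T (m + 2) + T m ≤ 2 * T (m + 1)

theorem IsConcaveSeq.ciInf {ι : Type*} [Nonempty ι] {T : ι → ℕ → ℝ}
    (hT : ∀ i, IsConcaveSeq n (T i)) (hb : ∀ k ≤ n, BddBelow (Set.range fun i => T i k)) :
    IsConcaveSeq n fun k => ⨅ i, T i k := by
  intro m hm
  have : ((⨅ i, T i (m + 2)) + ⨅ i, T i m) / 2 ≤ ⨅ i, T i (m + 1) := le_ciInf fun i => by
    linarith [ciInf_le (hb _ hm) i, ciInf_le (hb m (by omega)) i, hT i m hm]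
  linarith

theorem ofPartialSums_mem_domCone_iff {T : ℕ → ℝ} :
    ofPartialSums n T ∈ domCone n ↔ IsConcaveSeq n T := by
  constructor
  · intro h m hm
    have := h ⟨m, by omega⟩ ⟨m + 1, by omega⟩ (Fin.mk_le_mk.mpr m.le_succ)
    simp only [ofPartialSums] at this
    linarith
  · intro h i j hij
    have hanti : AntitoneOn (fun m => T (m + 1) - T m) (Set.Iio n) :=
      antitoneOn_of_succ_le Set.ordConnected_Iio fun m _ _ hm => by
        simp only [Order.succ_eq_add_one, Set.mem_Iio] at hm ⊢
        linarith [h m (by omega)]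
    exact hanti i.isLt j.isLt hij

theorem isConcaveSeq_psum {x : EuclideanSpace ℝ (Fin n)} (hx : x ∈ domCone n) :
    IsConcaveSeq n (psum x) := by
  intro m hm
  rw [psum_succ x (by omega : m + 1 < n), psum_succ x (by omega : m < n)]
  linarith [hx ⟨m, by omega⟩ ⟨m + 1, hm⟩ (Fin.mk_le_mk.mpr m.le_succ)]

theorem ofPartialSums_mem_Md {T : ℕ → ℝ} (hT0 : T 0 = 0)
    (hT : IsConcaveSeq n T) (hd : ∀ k, 1 ≤ k → k < n → d k ≤ T k) (hdn : d n = T n) :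
    ofPartialSums n T ∈ Md n d := by
  refine ⟨ofPartialSums_mem_domCone_iff.mpr hT, fun k hk hkn => ?_, ?_⟩
  · rw [psum_ofPartialSums hT0 hkn.le]
    exact hd k hk hkn
  · rw [psum_ofPartialSums hT0 le_rfl, hdn]

theorem mul_psum_le_of_mem_domCone {x : EuclideanSpace ℝ (Fin n)} (hx : x ∈ domCone n)
    {k : ℕ} (hk : k ≤ n) : (k : ℝ) * psum x n ≤ n * psum x k := by
  have hpair : ∀ i < k, ∀ j ∈ Ico k n, zeroExtend x j ≤ zeroExtend x i := fun i hi j hj => by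
    rw [mem_Ico] at hj
    rw [zeroExtend_of_lt x hj.2, zeroExtend_of_lt x (by omega)]
    exact hx _ _ (Fin.mk_le_mk.mpr (by omega))
  have hdouble : 0 ≤ ∑ i ∈ range k, ∑ j ∈ Ico k n, (zeroExtend x i - zeroExtend x j) :=
    sum_nonneg fun i hi => sum_nonneg fun j hj => sub_nonneg.mpr (hpair i (mem_range.mp hi) j hj)
  have hsplit : psum x n = psum x k + ∑ j ∈ Ico k n, zeroExtend x j := by
    rw [psum_eq_sum_range x le_rfl, psum_eq_sum_range x hk, sum_range_add_sum_Ico _ hk]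
  simp only [sum_sub_distrib, sum_const, Nat.card_Ico, card_range, nsmul_eq_mul, ← mul_sum,
    ← psum_eq_sum_range x hk] at hdouble
  rw [Nat.cast_sub hk] at hdouble
  rw [hsplit]
  linarith

theorem Md_nonempty (hn : 1 ≤ n) {a : ℝ} (ha : d n = a) :
    (Md n d).Nonempty := by
  obtain ⟨C, hC0, hC⟩ : ∃ C : ℝ, 0 ≤ C ∧ ∀ k < n, (d k).unbotD 0 - k * (a / n) ≤ C := by
    obtain ⟨C, hC⟩ := ((range n).image fun k => (d k).unbotD 0 - k * (a / n)).exists_le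
    exact ⟨max C 0, le_max_right _ _, fun k hk =>
      (hC _ (mem_image_of_mem _ (mem_range.mpr hk))).trans (le_max_left _ _)⟩
  -- a linear function through `(0, 0)` and `(n, a)`, lifted by a concave parabola above the `d k`
  set W : ℕ → ℝ := fun k => k * (a / n) + C * (k * (n - k))
  refine ⟨ofPartialSums n W, ofPartialSums_mem_Md (by simp [W]) (fun m hm => ?_)
    (fun k hk hkn => ?_) ?_⟩
  · simp only [W]
    push_cast
    nlinarith
  · have hkk : (1 : ℝ) ≤ k * (n - k) := by
      have : (1 : ℝ) ≤ k := by exact_mod_cast hk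
      have : (k : ℝ) + 1 ≤ n := by exact_mod_cast hkn
      nlinarith
    refine (WithBot.le_coe_unbotD (d k) 0).trans (WithBot.coe_le_coe.mpr ?_)
    nlinarith [hC k hkn]
  · rw [ha, WithBot.coe_inj]
    simp only [W, sub_self, mul_zero, add_zero]
    field_simp

theorem psum_eq_of_mem_Md {a : ℝ} (ha : d n = a) {μ : EuclideanSpace ℝ (Fin n)}
    (hμ : μ ∈ Md n d) : psum μ n = a := by
  have := hμ.2.2
  rw [ha] at this
  exact_mod_cast this.symm

theorem exists_forall_dle_of_mem_Md (hn : 1 ≤ n) {a : ℝ} (ha : d n = a) :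
    ∃ ρ ∈ Md n d, ∀ μ ∈ Md n d, dle ρ μ := by
  have : Nonempty (Md n d) := (Md_nonempty hn ha).to_subtype
  have hbdd (k : ℕ) (hk : k ≤ n) :
      BddBelow (Set.range fun μ : Md n d => psum (μ : EuclideanSpace ℝ (Fin n)) k) := by
    refine ⟨k * a / n, ?_⟩
    rintro _ ⟨μ, rfl⟩
    have := mul_psum_le_of_mem_domCone μ.2.1 hk
    rw [psum_eq_of_mem_Md ha μ.2] at this
    rw [div_le_iff₀ (by positivity)]
    linarith
  set T : ℕ → ℝ := fun k => ⨅ μ : Md n d, psum (μ : EuclideanSpace ℝ (Fin n)) k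
  have hTle : ∀ μ ∈ Md n d, ∀ k ≤ n, T k ≤ psum μ k := fun μ hμ k hk =>
    ciInf_le (hbdd k hk) ⟨μ, hμ⟩
  have hT0 : T 0 = 0 := by simp [T, psum_zero]
  have hTn : T n = a := by simp [T, psum_eq_of_mem_Md ha (Subtype.prop _)]
  have hTd : ∀ k, 1 ≤ k → k < n → d k ≤ T k := fun k hk hkn =>
    WithBot.le_coe_ciInf fun μ => μ.2.2.1 k hk hkn
  have hρ := ofPartialSums_mem_Md hT0 (IsConcaveSeq.ciInf (fun μ => isConcaveSeq_psum μ.2.1) hbdd)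
    hTd (by rw [hTn, ha])
  refine ⟨_, hρ, fun μ hμ => ⟨fun k _ hkn => ?_, ?_⟩⟩
  · rw [psum_ofPartialSums hT0 hkn.le]
    exact hTle μ hμ k hkn.le
  · rw [psum_ofPartialSums hT0 le_rfl, hTn, psum_eq_of_mem_Md ha hμ]

theorem IsConcaveSeq.sub_single {T : ℕ → ℝ} (hT : IsConcaveSeq n T) {j : ℕ} {ε : ℝ}
    (hε : 0 ≤ ε) (hj : T (j + 2) + T j + 2 * ε ≤ 2 * T (j + 1)) :
    IsConcaveSeq n (T - Pi.single (j + 1) ε) := by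
  intro m hm
  rcases eq_or_ne m j with rfl | hmj
  · simp only [Pi.sub_apply, Pi.single_eq_same, Pi.single_eq_of_ne (show m + 2 ≠ m + 1 by omega),
      Pi.single_eq_of_ne (show m ≠ m + 1 by omega), sub_zero]
    linarith
  · have h0 (k : ℕ) : 0 ≤ (Pi.single (j + 1) ε : ℕ → ℝ) k := by
      rw [Pi.single_apply]
      split_ifs <;> simp [hε]
    simp only [Pi.sub_apply, Pi.single_eq_of_ne (show m + 1 ≠ j + 1 by omega), sub_zero]
    linarith [hT m hm, h0 (m + 2), h0 m]

theorem ofPartialSums_psum_sub_single_mem_Md {ρ : EuclideanSpace ℝ (Fin n)}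
    (hρ : ρ ∈ Md n d) {j : ℕ} (hj : j + 1 < n) {ε : ℝ} (hε : 0 ≤ ε)
    (hgap : ρ ⟨j + 1, hj⟩ + 2 * ε ≤ ρ ⟨j, by omega⟩) (hd : d (j + 1) ≤ ↑(psum ρ (j + 1) - ε)) :
    ofPartialSums n (psum ρ - Pi.single (j + 1) ε) ∈ Md n d := by
  refine ofPartialSums_mem_Md (by simp [psum_zero]) ((isConcaveSeq_psum hρ.1).sub_single hε ?_)
    (fun k hk hkn => ?_) ?_
  · rw [psum_succ ρ hj, psum_succ ρ (by omega : j < n)]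
    linarith
  · rcases eq_or_ne k (j + 1) with rfl | hkj
    · simpa using hd
    · simpa [hkj] using hρ.2.1 k hk hkn
  · simpa [show n ≠ j + 1 by omega] using hρ.2.2

/-- Complementary slackness: were `ρ` strictly decreasing at `j`, then `S_{j+1}(ρ)` could be
lowered by some `ε > 0` inside `M_d`. -/
theorem coord_succ_eq_of_lt_psum {ρ : EuclideanSpace ℝ (Fin n)}
    (hρ : ρ ∈ Md n d) (hmin : ∀ μ ∈ Md n d, dle ρ μ) {j : ℕ} (hj : j + 1 < n)
    (hlt : d (j + 1) < ↑(psum ρ (j + 1))) : ρ ⟨j + 1, hj⟩ = ρ ⟨j, by omega⟩ := by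
  have hle : ρ ⟨j + 1, hj⟩ ≤ ρ ⟨j, by omega⟩ := hρ.1 _ _ (Fin.mk_le_mk.mpr (by omega))
  refine hle.antisymm (not_lt.mp fun hgap => ?_)
  obtain ⟨t, hdt, hts⟩ : ∃ t : ℝ, d (j + 1) ≤ t ∧ t < psum ρ (j + 1) := by
    cases hd : d (j + 1) with
    | bot => exact ⟨psum ρ (j + 1) - 1, bot_le, by linarith⟩
    | coe c => exact ⟨c, le_rfl, WithBot.coe_lt_coe.mp (hd ▸ hlt)⟩
  set ε := min (psum ρ (j + 1) - t) ((ρ ⟨j, by omega⟩ - ρ ⟨j + 1, hj⟩) / 2)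
  have hεt : ε ≤ psum ρ (j + 1) - t := min_le_left _ _
  have hεgap : ε ≤ (ρ ⟨j, by omega⟩ - ρ ⟨j + 1, hj⟩) / 2 := min_le_right _ _
  have hε : 0 < ε := lt_min (by linarith) (by linarith)
  have hmem := ofPartialSums_psum_sub_single_mem_Md hρ hj hε.le (by linarith)
    (hdt.trans (WithBot.coe_le_coe.mpr (by linarith)))
  have hlower := (hmin _ hmem).1 (j + 1) j.succ_pos hj
  rw [psum_ofPartialSums (by simp [psum_zero]) hj.le] at hlower
  simp only [Pi.sub_apply, Pi.single_eq_same] at hlower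
  linarith

theorem sum_mul_eq_neg_sum_psum_mul (y v : Fin n → ℝ) (hy : psum y n = 0) :
    ∑ i, y i * v i =
      -∑ i ∈ range (n - 1), psum y (i + 1) * (zeroExtend v (i + 1) - zeroExtend v i) := by
  calc ∑ i, y i * v i = ∑ i ∈ range n, zeroExtend v i • zeroExtend y i := by
        rw [← Fin.sum_univ_eq_sum_range]
        simp [zeroExtend, mul_comm]
    _ = _ := by
        rw [sum_range_by_parts, ← psum_eq_sum_range y le_rfl, hy, smul_zero, zero_sub]
        congr 1
        refine sum_congr rfl fun i hi => ?_
        rw [← psum_eq_sum_range y (by rw [mem_range] at hi; omega), smul_eq_mul, mul_comm]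

theorem inner_sub_nonpos_of_forall_dle {x ρ c : EuclideanSpace ℝ (Fin n)}
    (hx : ∀ k, 1 ≤ k → k ≤ n → d k = ↑(psum x k)) (hρ : ρ ∈ Md n d)
    (hmin : ∀ μ ∈ Md n d, dle ρ μ) (hc : c ∈ domCone n) :
    ⟪x - ρ, c - ρ⟫_ℝ ≤ 0 := by
  have hx_le : ∀ k, 1 ≤ k → k < n → psum x k ≤ psum ρ k := fun k hk hkn => by
    have := hρ.2.1 k hk hkn
    rw [hx k hk hkn.le] at this
    exact_mod_cast this
  have hsum : psum (x - ρ) n = 0 := by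
    rcases Nat.eq_zero_or_pos n with rfl | hn
    · exact psum_zero _
    · have := hρ.2.2
      rw [hx n hn le_rfl] at this
      simp only [WithLp.ofLp_sub, psum_sub, sub_eq_zero]
      exact_mod_cast this
  simp only [PiLp.inner_apply, Real.inner_apply]
  rw [sum_mul_eq_neg_sum_psum_mul _ _ hsum, neg_nonpos]
  refine sum_nonneg fun i hi => ?_
  have hin : i + 1 < n := by rw [mem_range] at hi; omega
  simp only [zeroExtend_of_lt _ hin, zeroExtend_of_lt _ (by omega : i < n), WithLp.ofLp_sub,
    Pi.sub_apply, psum_sub]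
  have hc' : c ⟨i + 1, hin⟩ ≤ c ⟨i, by omega⟩ := hc _ _ (Fin.mk_le_mk.mpr (by omega))
  rcases (hx_le (i + 1) i.succ_pos hin).lt_or_eq with hlt | heq
  · have hflat := coord_succ_eq_of_lt_psum hρ hmin hin
      (by rw [hx (i + 1) i.succ_pos hin.le]; exact_mod_cast hlt)
    rw [hflat]
    nlinarith
  · rw [heq, sub_self, zero_mul]

end

/-- Proposition 1.2(2) and §2.2 for `GL_n`: for `d = (d_1, …, d_n)` with
`d_1, …, d_{n-1} ∈ ℝ ∪ {-∞}` and `d_n ∈ ℝ`, the set `M_d` has a unique minimal element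
`ρ(d)` for the dominance order; and if all `d_i` are finite and `x` has partial sums
`S_i(x) = d_i`, then `ρ(d) = r(x)`. -/
theorem stmt_7 (n : ℕ) (hn : 1 ≤ n)
    (d : ℕ → WithBot ℝ) (hdn : ∃ a : ℝ, d n = (a : WithBot ℝ)) :
    (∃! ρ : EuclideanSpace ℝ (Fin n), ρ ∈ Md n d ∧ ∀ μ ∈ Md n d, dle ρ μ) ∧
    (∀ x : EuclideanSpace ℝ (Fin n),
      (∀ k, 1 ≤ k → k ≤ n → d k = ((psum x k : ℝ) : WithBot ℝ)) →
      ∀ r : EuclideanSpace ℝ (Fin n) → EuclideanSpace ℝ (Fin n),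
        IsClosestPointMap n r →
      ∀ ρ : EuclideanSpace ℝ (Fin n),
        (ρ ∈ Md n d ∧ ∀ μ ∈ Md n d, dle ρ μ) → ρ = r x) := by
  obtain ⟨a, ha⟩ := hdn
  obtain ⟨ρ, hρ, hmin⟩ := exists_forall_dle_of_mem_Md hn ha
  refine ⟨⟨ρ, ⟨hρ, hmin⟩, fun μ hμ => dle_antisymm (hμ.2 ρ hρ) (hmin μ hμ.1)⟩, ?_⟩
  intro x hx r hr ρ' ⟨hρ', hmin'⟩
  obtain ⟨hrx, hr_le⟩ := hr x
  refine (eq_of_inner_sub_nonpos_of_norm_sub_le (inner_sub_nonpos_of_forall_dle hx hρ' hmin' hrx)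
    ?_).symm
  simpa only [dist_eq_norm] using hr_le ρ' hρ'.1
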